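/- arXiv:1608.05944 — 4 statements merged into one kernel-verified Lean document; each statement's English description precedes it below -/
import Mathlib

section
/- Let a > 0, a ≠ 1, and define X : ℝ² → ℝ³ by X(u,v) = ( cosh(a u)·sin(a v)/a , [−sin v·cos(a v)·sinh u·sinh(a u) + a·sin(a v)·cos v·sinh u·sinh(a u) + a·sin v·cos(a v)·cosh u·cosh(a u) − cos v·sin(a v)·cosh u·cosh(a u)]/(a²−1) + sinh u·cos v , [a·cos v·sin(a v)·cosh u·sinh(a u) − sin v·cos(a v)·cosh u·sinh(a u) + a·sin v·cos(a v)·sinh u·cosh(a u) − cos v·sin(a v)·sinh u·cosh(a u)]/(a²−1) + cos v·cosh u ). Then each coordinate function of X is harmonic on ℝ², i.e. ∂²X_k/∂u² + ∂²X_k/∂v² = 0 for k = 1,2,3. -/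
open Real

/-- First coordinate of the bending helicoid with spacelike axis. -/
noncomputable def X1 (a u v : ℝ) : ℝ :=
  cosh (a*u) * sin (a*v) / a

/-- Second coordinate of the bending helicoid with spacelike axis. -/
noncomputable def X2 (a u v : ℝ) : ℝ :=
  (- sin v * cos (a*v) * sinh u * sinh (a*u)
   + a * sin (a*v) * cos v * sinh u * sinh (a*u)
   + a * sin v * cos (a*v) * cosh u * cosh (a*u)
   - cos v * sin (a*v) * cosh u * cosh (a*u)) / (a^2 - 1)
  + sinh u * cos v

/-- Third coordinate of the bending helicoid with spacelike axis. -/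
noncomputable def X3 (a u v : ℝ) : ℝ :=
  (a * cos v * sin (a*v) * cosh u * sinh (a*u)
   - sin v * cos (a*v) * cosh u * sinh (a*u)
   + a * sin v * cos (a*v) * sinh u * cosh (a*u)
   - cos v * sin (a*v) * sinh u * cosh (a*u)) / (a^2 - 1)
  + cos v * cosh u

/-!
Each coordinate is the imaginary part of an entire function of `z = u + v * I`, namely of a
primitive of the Weierstrass data `(cosh (a z), sinh z sinh (a z) + I cosh z,
cosh z sinh (a z) + I sinh z)` (for `a² ≠ 1`). The imaginary part of an entire `F` is harmonic:
along the `u`-direction its second derivative is `Im F''`, along the `v`-direction `Im (I² F'')`.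
-/

open Complex

noncomputable def coordLaplacian (f : ℝ → ℝ → ℝ) (u v : ℝ) : ℝ :=
  deriv (deriv fun s => f s v) u + deriv (deriv fun t => f u t) v

lemma hasDerivAt_im_comp_line {F : ℂ → ℂ} (hF : Differentiable ℂ F) (z c : ℂ) (s : ℝ) :
    HasDerivAt (fun s : ℝ => (F (z + s * c)).im) (c * deriv F (z + s * c)).im s := by
  have hline : HasDerivAt (fun s : ℝ => z + (s : ℂ) * c) c s := by
    simpa using ((hasDerivAt_id s).ofReal_comp.mul_const c).const_add z
  have h := imCLM.hasFDerivAt.comp_hasDerivAt s ((hF _).hasDerivAt.comp s hline)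
  rwa [imCLM_apply, mul_comm] at h

lemma deriv_deriv_im_comp_line {F : ℂ → ℂ} (hF : Differentiable ℂ F) (z c : ℂ) (s : ℝ) :
    deriv (deriv fun s : ℝ => (F (z + s * c)).im) s
      = (c ^ 2 * deriv (deriv F) (z + s * c)).im := by
  have h : deriv (fun s : ℝ => (F (z + s * c)).im)
      = fun s : ℝ => ((fun w => c * deriv F w) (z + s * c)).im :=
    funext fun s => (hasDerivAt_im_comp_line hF z c s).deriv
  rw [h, (hasDerivAt_im_comp_line (hF.deriv.const_mul c) z c s).deriv, deriv_const_mul_field',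
    sq, mul_assoc]

theorem coordLaplacian_eq_zero_of_eq_im {F : ℂ → ℂ} (hF : Differentiable ℂ F)
    {f : ℝ → ℝ → ℝ} (hf : ∀ u v, f u v = (F (u + v * I)).im) (u v : ℝ) :
    coordLaplacian f u v = 0 := by
  have hu : (fun s => f s v) = fun s : ℝ => (F (v * I + s * 1)).im := by
    funext s; rw [hf, mul_one, add_comm]
  have hv : (fun t => f u t) = fun t : ℝ => (F (u + t * I)).im := funext (hf u)
  rw [coordLaplacian, hu, hv, deriv_deriv_im_comp_line hF, deriv_deriv_im_comp_line hF, mul_one,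
    add_comm (v * I)]
  simp

lemma sinh_ofReal_add_mul_I (x y : ℝ) :
    sinh (x + y * I) = (Real.sinh x * Real.cos y : ℝ) + (Real.cosh x * Real.sin y : ℝ) * I := by
  rw [Complex.sinh_add, sinh_mul_I, cosh_mul_I]; push_cast; ring

lemma cosh_ofReal_add_mul_I (x y : ℝ) :
    cosh (x + y * I) = (Real.cosh x * Real.cos y : ℝ) + (Real.sinh x * Real.sin y : ℝ) * I := by
  rw [Complex.cosh_add, sinh_mul_I, cosh_mul_I]; push_cast; ring

lemma ofReal_mul_add_mul_I (k x y : ℝ) :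
    (k : ℂ) * (x + y * I) = (k * x : ℝ) + (k * y : ℝ) * I := by
  push_cast; ring

noncomputable def helicoidPotential1 (a : ℝ) (z : ℂ) : ℂ := sinh (a * z) / a

noncomputable def helicoidPotential2 (a : ℝ) (z : ℂ) : ℂ :=
  (a * cosh (a * z) * sinh z - sinh (a * z) * cosh z) / (a ^ 2 - 1 : ℝ) + I * sinh z

noncomputable def helicoidPotential3 (a : ℝ) (z : ℂ) : ℂ :=
  (a * cosh (a * z) * cosh z - sinh (a * z) * sinh z) / (a ^ 2 - 1 : ℝ) + I * cosh z

lemma X1_eq_im (a u v : ℝ) : X1 a u v = (helicoidPotential1 a (u + v * I)).im := by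
  rw [helicoidPotential1, ofReal_mul_add_mul_I, sinh_ofReal_add_mul_I]
  simp only [X1, div_ofReal_im, mul_im, ofReal_re, ofReal_im, I_re, I_im, add_im]
  ring

lemma X2_eq_im (a u v : ℝ) : X2 a u v = (helicoidPotential2 a (u + v * I)).im := by
  rw [helicoidPotential2, ofReal_mul_add_mul_I, sinh_ofReal_add_mul_I, cosh_ofReal_add_mul_I,
    sinh_ofReal_add_mul_I, cosh_ofReal_add_mul_I]
  simp only [X2, add_im, sub_im, mul_im, mul_re, add_re, ofReal_re, ofReal_im, I_re, I_im,
    div_ofReal_im]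
  ring

lemma X3_eq_im (a u v : ℝ) : X3 a u v = (helicoidPotential3 a (u + v * I)).im := by
  rw [helicoidPotential3, ofReal_mul_add_mul_I, sinh_ofReal_add_mul_I, cosh_ofReal_add_mul_I,
    sinh_ofReal_add_mul_I, cosh_ofReal_add_mul_I]
  simp only [X3, add_im, sub_im, mul_im, mul_re, add_re, ofReal_re, ofReal_im, I_re, I_im,
    div_ofReal_im]
  ring

theorem bending_helicoid_spacelike_harmonic_general (a : ℝ) (u v : ℝ) :
    deriv (deriv (fun s => X1 a s v)) u + deriv (deriv (fun t => X1 a u t)) v = 0 ∧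
    deriv (deriv (fun s => X2 a s v)) u + deriv (deriv (fun t => X2 a u t)) v = 0 ∧
    deriv (deriv (fun s => X3 a s v)) u + deriv (deriv (fun t => X3 a u t)) v = 0 :=
  ⟨coordLaplacian_eq_zero_of_eq_im (by unfold helicoidPotential1; fun_prop) (X1_eq_im a) u v,
    coordLaplacian_eq_zero_of_eq_im (by unfold helicoidPotential2; fun_prop) (X2_eq_im a) u v,
    coordLaplacian_eq_zero_of_eq_im (by unfold helicoidPotential3; fun_prop) (X3_eq_im a) u v⟩

/-- Each coordinate function of the bending helicoid with spacelike axis is harmonic. -/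
theorem bending_helicoid_spacelike_harmonic (a : ℝ) (ha : 0 < a) (ha1 : a ≠ 1) (u v : ℝ) :
    deriv (deriv (fun s => X1 a s v)) u + deriv (deriv (fun t => X1 a u t)) v = 0 ∧
    deriv (deriv (fun s => X2 a s v)) u + deriv (deriv (fun t => X2 a u t)) v = 0 ∧
    deriv (deriv (fun s => X3 a s v)) u + deriv (deriv (fun t => X3 a u t)) v = 0 :=
  bending_helicoid_spacelike_harmonic_general a u v
end

section
/- Let a > 0, a ≠ 1, and define X : ℝ² → ℝ³ by X(u,v) = ( cosh(a u)·sin(a v)/a , [−sin v·cos(a v)·sinh u·sinh(a u) + a·sin(a v)·cos v·sinh u·sinh(a u) + a·sin v·cos(a v)·cosh u·cosh(a u) − cos v·sin(a v)·cosh u·cosh(a u)]/(a²−1) + sinh u·cos v , [a·cos v·sin(a v)·cosh u·sinh(a u) − sin v·cos(a v)·cosh u·sinh(a u) + a·sin v·cos(a v)·sinh u·cosh(a u) − cos v·sin(a v)·sinh u·cosh(a u)]/(a²−1) + cos v·cosh u ). Then X is Lorentz-conformal: for all (u,v) ∈ ℝ², ⟨X_u, X_u⟩_L = ⟨X_v,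 X_v⟩_L and ⟨X_u, X_v⟩_L = 0. -/
open Real

/-- Lorentzian inner product on ℝ³: ⟨p,q⟩ = p₁q₁ + p₂q₂ − p₃q₃. -/
noncomputable def lorentz (p q : ℝ × ℝ × ℝ) : ℝ :=
  p.1 * q.1 + p.2.1 * q.2.1 - p.2.2 * q.2.2

/-- Partial derivative of X with respect to u. -/
noncomputable def Xu (a u v : ℝ) : ℝ × ℝ × ℝ :=
  (deriv (fun s => X1 a s v) u, deriv (fun s => X2 a s v) u, deriv (fun s => X3 a s v) u)

/-- Partial derivative of X with respect to v. -/
noncomputable def Xv (a u v : ℝ) : ℝ × ℝ × ℝ :=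
  (deriv (fun t => X1 a u t) v, deriv (fun t => X2 a u t) v, deriv (fun t => X3 a u t) v)

/-! The last two coordinates are a hyperbolic rotation of rapidity `u` of a pair `(Y₂, Y₃)` in which
`u` enters only through `a u`: `(X₂, X₃) = B_u (Y₂, Y₃)` with `B_u = [[cosh u, sinh u], [sinh u, cosh u]]`.
Such boosts are Lorentz isometries, and `∂_u B_u = B_u ∘ (swap of x₂, x₃)`, so `X_u` and `X_v` are the
boosts by `u` of two explicit vectors, in which the `1/(a² - 1)` has cancelled. Their Lorentz products
reduce to `sin² + cos² = 1` and `cosh² - sinh² = 1`. -/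

noncomputable def boost (θ : ℝ) (p : ℝ × ℝ × ℝ) : ℝ × ℝ × ℝ :=
  (p.1, cosh θ * p.2.1 + sinh θ * p.2.2, sinh θ * p.2.1 + cosh θ * p.2.2)

theorem lorentz_boost (θ : ℝ) (p q : ℝ × ℝ × ℝ) :
    lorentz (boost θ p) (boost θ q) = lorentz p q := by
  unfold lorentz boost
  linear_combination (p.2.1 * q.2.1 - p.2.2 * q.2.2) * cosh_sq_sub_sinh_sq θ

noncomputable def Y2 (a u v : ℝ) : ℝ :=
  (a * sin v * cos (a*v) - cos v * sin (a*v)) / (a^2 - 1) * cosh (a*u)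

noncomputable def Y3 (a u v : ℝ) : ℝ :=
  (a * cos v * sin (a*v) - sin v * cos (a*v)) / (a^2 - 1) * sinh (a*u) + cos v

section

variable (a u v : ℝ)

theorem X2_eq : X2 a u v = cosh u * Y2 a u v + sinh u * Y3 a u v := by
  unfold X2 Y2 Y3
  ring

theorem X3_eq : X3 a u v = sinh u * Y2 a u v + cosh u * Y3 a u v := by
  unfold X3 Y2 Y3
  ring

theorem hasDerivAt_sin_const_mul (x : ℝ) : HasDerivAt (fun t => sin (a * t)) (cos (a * x) * a) x :=
  (hasDerivAt_const_mul a).sin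

theorem hasDerivAt_cos_const_mul (x : ℝ) : HasDerivAt (fun t => cos (a * t)) (-sin (a * x) * a) x :=
  (hasDerivAt_const_mul a).cos

theorem hasDerivAt_sinh_const_mul (x : ℝ) : HasDerivAt (fun t => sinh (a * t)) (cosh (a * x) * a) x :=
  (hasDerivAt_const_mul a).sinh

theorem hasDerivAt_cosh_const_mul (x : ℝ) : HasDerivAt (fun t => cosh (a * t)) (sinh (a * x) * a) x :=
  (hasDerivAt_const_mul a).cosh

theorem hasDerivAt_X1_u (h₀ : a ≠ 0) :
    HasDerivAt (fun s => X1 a s v) (sinh (a*u) * sin (a*v)) u :=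
  (((hasDerivAt_cosh_const_mul a u).mul_const (sin (a*v))).div_const a).congr_deriv
    (by field_simp)

theorem hasDerivAt_X1_v (h₀ : a ≠ 0) :
    HasDerivAt (fun t => X1 a u t) (cosh (a*u) * cos (a*v)) v :=
  (((hasDerivAt_sin_const_mul a v).const_mul (cosh (a*u))).div_const a).congr_deriv
    (by field_simp)

theorem hasDerivAt_Y2_u :
    HasDerivAt (fun s => Y2 a s v)
      ((a * sin v * cos (a*v) - cos v * sin (a*v)) / (a^2 - 1) * (sinh (a*u) * a)) u :=
  (hasDerivAt_cosh_const_mul a u).const_mul _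

theorem hasDerivAt_Y3_u :
    HasDerivAt (fun s => Y3 a s v)
      ((a * cos v * sin (a*v) - sin v * cos (a*v)) / (a^2 - 1) * (cosh (a*u) * a)) u :=
  ((hasDerivAt_sinh_const_mul a u).const_mul _).add_const _

theorem hasDerivAt_Y2_v (h₁ : a^2 - 1 ≠ 0) :
    HasDerivAt (fun t => Y2 a u t) (-(sin v * sin (a*v) * cosh (a*u))) v := by
  have h := (((((hasDerivAt_sin v).const_mul a).mul (hasDerivAt_cos_const_mul a v)).sub
    ((hasDerivAt_cos v).mul (hasDerivAt_sin_const_mul a v))).div_const (a^2 - 1)).mul_const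
    (cosh (a*u))
  exact h.congr_deriv (by field_simp; ring)

theorem hasDerivAt_Y3_v (h₁ : a^2 - 1 ≠ 0) :
    HasDerivAt (fun t => Y3 a u t) (cos v * cos (a*v) * sinh (a*u) - sin v) v := by
  have h := ((((((hasDerivAt_cos v).const_mul a).mul (hasDerivAt_sin_const_mul a v)).sub
    ((hasDerivAt_sin v).mul (hasDerivAt_cos_const_mul a v))).div_const (a^2 - 1)).mul_const
    (sinh (a*u))).add (hasDerivAt_cos v)
  exact h.congr_deriv (by field_simp; ring)

theorem Xu_eq_boost (h₀ : a ≠ 0) (h₁ : a^2 - 1 ≠ 0) :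
    Xu a u v = boost u (sinh (a*u) * sin (a*v), cos v + sin v * cos (a*v) * sinh (a*u),
      cos v * sin (a*v) * cosh (a*u)) := by
  have h2 : HasDerivAt (fun s => cosh s * Y2 a s v + sinh s * Y3 a s v) _ u :=
    ((hasDerivAt_cosh u).mul (hasDerivAt_Y2_u a u v)).add
      ((hasDerivAt_sinh u).mul (hasDerivAt_Y3_u a u v))
  have h3 : HasDerivAt (fun s => sinh s * Y2 a s v + cosh s * Y3 a s v) _ u :=
    ((hasDerivAt_sinh u).mul (hasDerivAt_Y2_u a u v)).add
      ((hasDerivAt_cosh u).mul (hasDerivAt_Y3_u a u v))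
  simp only [Xu, X2_eq, X3_eq]
  rw [(hasDerivAt_X1_u a u v h₀).deriv, h2.deriv, h3.deriv]
  simp only [boost, Prod.mk.injEq, Y2, Y3]
  refine ⟨trivial, ?_, ?_⟩ <;> field_simp <;> ring

theorem Xv_eq_boost (h₀ : a ≠ 0) (h₁ : a^2 - 1 ≠ 0) :
    Xv a u v = boost u (cosh (a*u) * cos (a*v), -(sin v * sin (a*v) * cosh (a*u)),
      cos v * cos (a*v) * sinh (a*u) - sin v) := by
  have h2 : HasDerivAt (fun t => cosh u * Y2 a u t + sinh u * Y3 a u t) _ v :=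
    ((hasDerivAt_Y2_v a u v h₁).const_mul _).add ((hasDerivAt_Y3_v a u v h₁).const_mul _)
  have h3 : HasDerivAt (fun t => sinh u * Y2 a u t + cosh u * Y3 a u t) _ v :=
    ((hasDerivAt_Y2_v a u v h₁).const_mul _).add ((hasDerivAt_Y3_v a u v h₁).const_mul _)
  simp only [Xv, X2_eq, X3_eq]
  rw [(hasDerivAt_X1_v a u v h₀).deriv, h2.deriv, h3.deriv]
  rfl

end

/-- The bending helicoid with spacelike axis is Lorentz-conformal. -/
theorem bending_helicoid_spacelike_conformal (a : ℝ) (ha : 0 < a) (ha1 : a ≠ 1) (u v : ℝ) :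
    lorentz (Xu a u v) (Xu a u v) = lorentz (Xv a u v) (Xv a u v) ∧
    lorentz (Xu a u v) (Xv a u v) = 0 := by
  have hd : a^2 - 1 ≠ 0 :=
    sub_ne_zero.2 ((pow_eq_one_iff_of_nonneg ha.le two_ne_zero).not.2 ha1)
  rw [Xu_eq_boost a u v ha.ne' hd, Xv_eq_boost a u v ha.ne' hd]
  simp only [lorentz_boost]
  unfold lorentz
  constructor
  · linear_combination
      (1 + sinh (a*u)^2 * cos (a*v)^2 - cosh (a*u)^2 * sin (a*v)^2) * sin_sq_add_cos_sq v
      + (sinh (a*u)^2 - cosh (a*u)^2) * sin_sq_add_cos_sq (a*v) - cosh_sq_sub_sinh_sq (a*u)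
  · linear_combination -(sinh (a*u) * cosh (a*u) * sin (a*v) * cos (a*v)) * sin_sq_add_cos_sq v
end

section
/- Let a > 0, a ≠ 1, and let X : ℝ² → ℝ³ be defined by X(u,v) = ( cosh(a u)·sin(a v)/a , [−sin v·cos(a v)·sinh u·sinh(a u) + a·sin(a v)·cos v·sinh u·sinh(a u) + a·sin v·cos(a v)·cosh u·cosh(a u) − cos v·sin(a v)·cosh u·cosh(a u)]/(a²−1) + sinh u·cos v , [a·cos v·sin(a v)·cosh u·sinh(a u) − sin v·cos(a v)·cosh u·sinh(a u) + a·sin v·cos(a v)·sinh u·cosh(a u) − cos v·sin(a v)·sinh u·cosh(a u)]/(a²−1) + cos v·cosh u ). Then for every u ∈ ℝ: (i) X(u,0) = (0, sinh u, cosh u); and (ii) the vector V(u) = (sinh(a u), cosh(a u)·sinh u, cosh(a u)·cosh u) satisfies ⟨V(u),V(u)⟩_L = −1, ⟨V(u), ∂X/∂u (u,0)⟩_L = 0 and ⟨V(u), ∂X/∂v (u,0)⟩_L = 0. -/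
open Real

/-- The Björling data normal field. -/
noncomputable def V (a u : ℝ) : ℝ × ℝ × ℝ :=
  (sinh (a*u), cosh (a*u) * sinh u, cosh (a*u) * cosh u)

/-!
Along `v = 0` every term of `X` carrying a factor `sin v` or `sin (a v)` vanishes, so `X(u, 0)` is
the circle `(0, sinh u, cosh u)` and `∂X/∂u (u, 0) = (0, cosh u, sinh u)`. In `∂X/∂v (u, 0)` only
the derivatives of those sine factors survive, and the numerators of `X₂` and `X₃` then become
`(a² − 1)` times `sinh u sinh (a u)` and `cosh u sinh (a u)`, cancelling the denominator. The three
Lorentzian identities for `V` then reduce to `cosh² − sinh² = 1`.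
-/

section Curve

variable (a : ℝ)

lemma X1_zero : (fun s => X1 a s 0) = fun _ => 0 := by
  funext s; simp [X1]

lemma X2_zero : (fun s => X2 a s 0) = sinh := by
  funext s; simp [X2]

lemma X3_zero : (fun s => X3 a s 0) = cosh := by
  funext s; simp [X3]

lemma X_zero (u : ℝ) : (X1 a u 0, X2 a u 0, X3 a u 0) = (0, sinh u, cosh u) := by
  rw [congrFun (X1_zero a) u, congrFun (X2_zero a) u, congrFun (X3_zero a) u]

lemma Xu_zero (u : ℝ) : Xu a u 0 = (0, cosh u, sinh u) := by
  simp [Xu, X1_zero, X2_zero, X3_zero, Real.deriv_sinh, Real.deriv_cosh]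

end Curve

section Normal

variable (a u : ℝ)

lemma hasDerivAt_sin_mul_mul_cos_mul_zero (b c : ℝ) :
    HasDerivAt (fun t => sin (b * t) * cos (c * t)) b 0 := by
  have hsin := ((hasDerivAt_id' (0 : ℝ)).const_mul b).sin
  have hcos := ((hasDerivAt_id' (0 : ℝ)).const_mul c).cos
  exact (hsin.mul hcos).congr_deriv (by simp)

lemma hasDerivAt_helicoid_profile_zero (P Q R : ℝ) :
    HasDerivAt (fun t => (sin t * cos (a * t) * P + sin (a * t) * cos t * Q) / (a ^ 2 - 1)
      + cos t * R) ((P + a * Q) / (a ^ 2 - 1)) 0 := by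
  have h₁ : HasDerivAt (fun t => sin t * cos (a * t)) 1 0 := by
    simpa using hasDerivAt_sin_mul_mul_cos_mul_zero 1 a
  have h₂ : HasDerivAt (fun t => sin (a * t) * cos t) a 0 := by
    simpa using hasDerivAt_sin_mul_mul_cos_mul_zero a 1
  have h₃ : HasDerivAt cos 0 0 := by simpa using hasDerivAt_cos 0
  exact ((((h₁.mul_const P).add (h₂.mul_const Q)).div_const _).add (h₃.mul_const R)).congr_deriv
    (by ring)

lemma hasDerivAt_X1_zero (ha : a ≠ 0) : HasDerivAt (X1 a u ·) (cosh (a * u)) 0 := by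
  have h := ((hasDerivAt_sin_mul_mul_cos_mul_zero a 0).const_mul (cosh (a * u))).div_const a
  simp only [zero_mul, cos_zero, mul_one] at h
  rwa [mul_div_cancel_right₀ _ ha] at h

lemma hasDerivAt_X2_zero (ha : a ^ 2 - 1 ≠ 0) :
    HasDerivAt (X2 a u ·) (sinh u * sinh (a * u)) 0 := by
  have h := hasDerivAt_helicoid_profile_zero a (a * (cosh u * cosh (a * u)) - sinh u * sinh (a * u))
    (a * (sinh u * sinh (a * u)) - cosh u * cosh (a * u)) (sinh u)
  convert h using 1
  · funext t; simp only [X2]; ring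
  · field_simp; ring

lemma hasDerivAt_X3_zero (ha : a ^ 2 - 1 ≠ 0) :
    HasDerivAt (X3 a u ·) (cosh u * sinh (a * u)) 0 := by
  have h := hasDerivAt_helicoid_profile_zero a (a * (sinh u * cosh (a * u)) - cosh u * sinh (a * u))
    (a * (cosh u * sinh (a * u)) - sinh u * cosh (a * u)) (cosh u)
  convert h using 1
  · funext t; simp only [X3]; ring
  · field_simp; ring

lemma Xv_zero (ha : a ≠ 0) (ha' : a ^ 2 - 1 ≠ 0) :
    Xv a u 0 = (cosh (a * u), sinh u * sinh (a * u), cosh u * sinh (a * u)) := by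
  simp only [Xv, (hasDerivAt_X1_zero a u ha).deriv, (hasDerivAt_X2_zero a u ha').deriv,
    (hasDerivAt_X3_zero a u ha').deriv]

lemma lorentz_V_self : lorentz (V a u) (V a u) = -1 := by
  simp only [lorentz, V]
  linear_combination (-cosh (a * u) ^ 2) * cosh_sq u - cosh_sq (a * u)

lemma lorentz_V_Xu_zero : lorentz (V a u) (Xu a u 0) = 0 := by
  simp only [Xu_zero, lorentz, V]; ring

lemma lorentz_V_Xv_zero (ha : a ≠ 0) (ha' : a ^ 2 - 1 ≠ 0) : lorentz (V a u) (Xv a u 0) = 0 := by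
  simp only [Xv_zero a u ha ha', lorentz, V]
  linear_combination (-(sinh (a * u) * cosh (a * u))) * cosh_sq u

end Normal

/-- The bending helicoid with spacelike axis contains the circle (0, sinh u, cosh u) and
V(u) is a unit timelike vector field normal to the surface along it. -/
theorem bending_helicoid_spacelike_bjorling (a : ℝ) (ha : 0 < a) (ha1 : a ≠ 1) (u : ℝ) :
    (X1 a u 0, X2 a u 0, X3 a u 0) = (0, sinh u, cosh u) ∧
    lorentz (V a u) (V a u) = -1 ∧
    lorentz (V a u) (Xu a u 0) = 0 ∧
    lorentz (V a u) (Xv a u 0) = 0 := by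
  have ha' : a ^ 2 - 1 ≠ 0 :=
    sub_ne_zero.2 fun h => ha1 ((pow_eq_one_iff_of_nonneg ha.le two_ne_zero).1 h)
  exact ⟨X_zero a u, lorentz_V_self a u, lorentz_V_Xu_zero a u, lorentz_V_Xv_zero a u ha.ne' ha'⟩
end

section
/- Let 0 < λ < 1, μ = √(1−λ²), a ∈ ℝ, and define X : ℝ² → ℝ³ by X(u,v) = ( −μ·cosh a·cos u·sinh v + λ·sinh a·sin u·sinh v + cos u·cosh v , cosh v·sin u − μ·cosh a·sin u·sinh v − λ·sinh a·cos u·sinh v , λ·u − v·sinh a ). For every θ ∈ ℝ let Φ(θ) : ℝ³ → ℝ³ be the helicoidal motion Φ(θ)(x,y,z) = (x·cos θ − y·sin θ, x·sin θ + y·cos θ, z + λθ). Then Φ(θ)(X(u,v)) = X(u+θ, v) for all θ, u, v ∈ ℝ; hence X is a helicoidal surface with timelike axis (0,0,1) and pitch λ. -/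
open Real

/-- The helicoidal surface obtained as the Björling solution for the spacelike helix
with timelike axis and constant normal field. -/
noncomputable def X (a lam mu u v : ℝ) : ℝ × ℝ × ℝ :=
  (- mu * cosh a * cos u * sinh v + lam * sinh a * sin u * sinh v + cos u * cosh v,
   cosh v * sin u - mu * cosh a * sin u * sinh v - lam * sinh a * cos u * sinh v,
   lam * u - v * sinh a)

/-- Helicoidal motion of Lorentz–Minkowski space with timelike axis (0,0,1) and pitch λ. -/
noncomputable def Phi (lam θ : ℝ) (p : ℝ × ℝ × ℝ) : ℝ × ℝ × ℝ :=
  (p.1 * cos θ - p.2.1 * sin θ,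
   p.1 * sin θ + p.2.1 * cos θ,
   p.2.2 + lam * θ)

/-- The surface X is helicoidal with timelike axis (0,0,1) and pitch λ: applying the
helicoidal motion of parameter θ corresponds to shifting the parameter u by θ. -/
theorem bjorling_helix_timelike_constant_is_helicoidal (a lam mu : ℝ)
    (hlam0 : 0 < lam) (hlam1 : lam < 1) (hmu : mu = Real.sqrt (1 - lam^2)) :
    ∀ θ u v : ℝ, Phi lam θ (X a lam mu u v) = X a lam mu (u + θ) v := by
  intro θ u v
  simp only [Phi, X, cos_add, sin_add, Prod.mk.injEq]
  refine ⟨by ring, by ring, by ring⟩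
end
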